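/- arXiv:2003.00279 — 3 statements merged into one kernel-verified Lean document; each statement's English description precedes it below -/
import Mathlib

section
/- Suppose Θ L₂ : X → X is a bounded linear operator on a Banach space X with ‖ΘL₂‖ ≤ B·h for a constant B > 0, and 𝔏 : X → X is another bounded linear operator with ‖I − 𝔏‖ ≤ c₂h² (interpolation error bound). If σ₁* solves σ₁* = 𝔏ΘL(φ, σ₁*) and σ₂* solves σ₂* = ΘL(φ, σ₂*), and Bh < 1/2 and ‖𝔏‖ ≤ 2, then ‖σ₁* − σ₂*‖ ≤ c₁h² for a constant c₁ depending only on B, c₂ and ‖σ₂*‖. -/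
/-- One-step discretization error of the fixed point (Lemma 1).
If `σ₁* = 𝔏(a + Kσ₁*)` (discretized fixed point, `K = ΘL₂`, `a = ΘL₁φ`),
`σ₂* = a + Kσ₂*` (exact fixed point), `‖K‖ ≤ B·h`, `‖I − 𝔏‖ ≤ c₂h²`,
`B·h < 1/2` and `‖𝔏‖ ≤ 2`, then `‖σ₁* − σ₂*‖ ≤ c₁·h²` with the constant
`c₁ = c₂·‖σ₂*‖/(1 − 2Bh)` depending only on `B`, `c₂` and `‖σ₂*‖`. -/
theorem one_step_fixed_point_error
    {X : Type*} [NormedAddCommGroup X] [NormedSpace ℝ X] [CompleteSpace X]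
    (K 𝔏 : X →L[ℝ] X) (a σ₁ σ₂ : X) (B c₂ h : ℝ)
    (hB : 0 < B) (hc₂ : 0 ≤ c₂) (hh : 0 < h)
    (hK : ‖K‖ ≤ B * h)
    (h𝔏 : ‖ContinuousLinearMap.id ℝ X - 𝔏‖ ≤ c₂ * h ^ 2)
    (hσ₁ : σ₁ = 𝔏 (a + K σ₁))
    (hσ₂ : σ₂ = a + K σ₂)
    (hBh : B * h < 1 / 2)
    (h𝔏n : ‖𝔏‖ ≤ 2) :
    ‖σ₁ - σ₂‖ ≤ (c₂ * ‖σ₂‖ / (1 - 2 * B * h)) * h ^ 2 := by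
  have h2 : a = σ₂ - K σ₂ := by rw [eq_sub_iff_add_eq]; exact hσ₂.symm
  have key : σ₁ - σ₂ = (𝔏 - ContinuousLinearMap.id ℝ X) σ₂ + 𝔏 (K (σ₁ - σ₂)) := by
    calc σ₁ - σ₂ = 𝔏 ((σ₂ - K σ₂) + K σ₁) - σ₂ := by rw [← h2, ← hσ₁]
    _ = (𝔏 - ContinuousLinearMap.id ℝ X) σ₂ + 𝔏 (K (σ₁ - σ₂)) := by
        simp [map_add, map_sub]; abel
  have hKd : ‖K (σ₁ - σ₂)‖ ≤ B * h * ‖σ₁ - σ₂‖ := by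
    calc ‖K (σ₁ - σ₂)‖ ≤ ‖K‖ * ‖σ₁ - σ₂‖ := K.le_opNorm _
    _ ≤ B * h * ‖σ₁ - σ₂‖ := by
        apply mul_le_mul_of_nonneg_right hK (norm_nonneg _)
  have h1 : ‖(𝔏 - ContinuousLinearMap.id ℝ X) σ₂‖ ≤ c₂ * h ^ 2 * ‖σ₂‖ := by
    calc ‖(𝔏 - ContinuousLinearMap.id ℝ X) σ₂‖ ≤ ‖𝔏 - ContinuousLinearMap.id ℝ X‖ * ‖σ₂‖ :=
      (𝔏 - ContinuousLinearMap.id ℝ X).le_opNorm _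
    _ ≤ c₂ * h ^ 2 * ‖σ₂‖ := by
        apply mul_le_mul_of_nonneg_right _ (norm_nonneg _)
        rw [norm_sub_rev]; exact h𝔏
  have h3 : ‖𝔏 (K (σ₁ - σ₂))‖ ≤ 2 * (B * h * ‖σ₁ - σ₂‖) := by
    calc ‖𝔏 (K (σ₁ - σ₂))‖ ≤ ‖𝔏‖ * ‖K (σ₁ - σ₂)‖ := 𝔏.le_opNorm _
    _ ≤ 2 * (B * h * ‖σ₁ - σ₂‖) := by
        apply mul_le_mul h𝔏n hKd (norm_nonneg _) (by norm_num)
  have hmain : ‖σ₁ - σ₂‖ ≤ c₂ * h ^ 2 * ‖σ₂‖ + 2 * (B * h * ‖σ₁ - σ₂‖) := by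
    calc ‖σ₁ - σ₂‖ = ‖(𝔏 - ContinuousLinearMap.id ℝ X) σ₂ + 𝔏 (K (σ₁ - σ₂))‖ := by rw [← key]
    _ ≤ ‖(𝔏 - ContinuousLinearMap.id ℝ X) σ₂‖ + ‖𝔏 (K (σ₁ - σ₂))‖ := norm_add_le _ _
    _ ≤ _ := add_le_add h1 h3
  have hpos : 0 < 1 - 2 * B * h := by linarith
  rw [div_mul_eq_mul_div, le_div_iff₀ hpos]
  nlinarith [norm_nonneg (σ₁ - σ₂), norm_nonneg σ₂]
end

section
/- Under the hypotheses of the previous lemma, the exact one-step evolution operator U(t₁+h, t₁)φ = L(φ, ω₂*) and the approximate operator Ū(t₁+h, t₁)φ = L(φ, ω₁*) satisfy ‖Ū(t₁+h, t₁) − U(t₁+h, t₁)‖ ≤ c₃h³, where c₃ > 0 is a constant independent of h. (The extra factor h comes from ‖L₂‖ ≤ h applied to the O(h²) fixed-point error.) -/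
/-- Lemma 2: the exact one-step evolution operator `U(t₁+h,t₁)φ = L(φ, ω₂*(φ))`
and its discretized approximation `Ū(t₁+h,t₁)φ = L(φ, ω₁*(φ))` differ only
through `L₂` applied to the fixed-point error, so since `‖L₂‖ ≤ h` and the
fixed points satisfy `‖ω₁* − ω₂*‖ ≤ c₁h²`, we get `‖Ū − U‖ ≤ c₃·h³`
(with `c₃ = c₁` independent of `h`). -/
theorem one_step_evolution_operator_error
    {P X Q : Type*}
    [NormedAddCommGroup P] [NormedSpace ℝ P]
    [NormedAddCommGroup X] [NormedSpace ℝ X]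
    [NormedAddCommGroup Q] [NormedSpace ℝ Q]
    (U Ubar : P →L[ℝ] Q) (L₂ : X →L[ℝ] Q) (ω₁ ω₂ : P →L[ℝ] X)
    (c₁ h : ℝ) (hc₁ : 0 ≤ c₁) (hh : 0 ≤ h)
    (hL₂ : ‖L₂‖ ≤ h)
    (hdiff : ∀ φ : P, Ubar φ - U φ = L₂ (ω₁ φ - ω₂ φ))
    (hω : ‖ω₁ - ω₂‖ ≤ c₁ * h ^ 2) :
    ‖Ubar - U‖ ≤ c₁ * h ^ 3 := by
  apply ContinuousLinearMap.opNorm_le_bound _ (by positivity)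
  intro φ
  have h1 : (Ubar - U) φ = L₂ ((ω₁ - ω₂) φ) := by
    simp [ContinuousLinearMap.sub_apply, hdiff φ]
  rw [h1]
  calc ‖L₂ ((ω₁ - ω₂) φ)‖ ≤ ‖L₂‖ * ‖(ω₁ - ω₂) φ‖ := L₂.le_opNorm _
    _ ≤ h * (‖ω₁ - ω₂‖ * ‖φ‖) := by
        apply mul_le_mul hL₂ ((ω₁ - ω₂).le_opNorm φ) (norm_nonneg _)
        exact hh
    _ ≤ h * (c₁ * h ^ 2 * ‖φ‖) := by
        apply mul_le_mul_of_nonneg_left _ hh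
        exact mul_le_mul_of_nonneg_right hω (norm_nonneg _)
    _ = c₁ * h ^ 3 * ‖φ‖ := by ring
end

section
/- Let g : [0, h] → ℝ be C³ with g(δt) = 0 and g'(δt) > 0 for some δt ∈ [0, h), and suppose g attains an interior maximum at δt + δt* with g''(δt) < 0. Then the Newton-type estimate δt*₀ := −g'(δt)/g''(δt) satisfies |δt* − δt*₀| = O(h²) as h → 0 (with δt, δt* = O(h)). -/
/-!
Expanding `g'` to first order around `δt`, the critical-point condition `g'(δt + δt*) = 0` reads
`g'(δt) + g''(δt) δt* = O(δt*²)`, with constant the Lipschitz constant of `g''` on `[0, 1]`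
(finite since `g` is C³). Dividing by `g''(δt) ≤ -m` turns this into
`|δt* + g'(δt)/g''(δt)| = O(h²)`.
-/

open Set

theorem abs_sub_sub_mul_le_of_lipschitzOnWith_deriv {f f' : ℝ → ℝ} {a b : ℝ} {K : NNReal}
    (hab : a ≤ b) (hf : ∀ x ∈ Icc a b, HasDerivAt f (f' x) x)
    (hf' : LipschitzOnWith K f' (Icc a b)) :
    |f b - f a - f' a * (b - a)| ≤ K * (b - a) ^ 2 := by
  have ha : a ∈ Icc a b := left_mem_Icc.2 hab
  have hb : b ∈ Icc a b := right_mem_Icc.2 hab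
  have hderiv : ∀ x ∈ Icc a b,
      HasDerivWithinAt (fun x ↦ f x - f' a * x) (f' x - f' a) (Icc a b) x := fun x hx ↦ by
    simpa using ((hf x hx).fun_sub ((hasDerivAt_id' x).const_mul (f' a))).hasDerivWithinAt
  have hbound : ∀ x ∈ Icc a b, ‖f' x - f' a‖ ≤ K * (b - a) := fun x hx ↦ by
    calc ‖f' x - f' a‖ ≤ K * ‖x - a‖ := hf'.norm_sub_le hx ha
      _ ≤ K * (b - a) := by
        rw [Real.norm_of_nonneg (sub_nonneg.2 hx.1)]
        gcongr
        exact hx.2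
  have := (convex_Icc a b).norm_image_sub_le_of_norm_hasDerivWithin_le hderiv hbound ha hb
  rw [Real.norm_eq_abs, Real.norm_of_nonneg (sub_nonneg.2 hab)] at this
  calc |f b - f a - f' a * (b - a)| = |f b - f' a * b - (f a - f' a * a)| := by ring_nf
    _ ≤ K * (b - a) * (b - a) := this
    _ = K * (b - a) ^ 2 := by ring

theorem abs_sub_neg_div_le_of_abs_add_mul_le {A d s E m : ℝ} (hm : 0 < m) (hA : A ≤ -m)
    (h : |d + A * s| ≤ E) : |s - -d / A| ≤ E / m := by
  have hA0 : A ≠ 0 := by linarith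
  have hmA : m ≤ |A| := by rw [abs_of_neg (by linarith)]; linarith
  calc |s - -d / A| = |d + A * s| / |A| := by
        rw [← abs_div]; congr 1; field_simp; ring
    _ ≤ E / m := div_le_div₀ ((abs_nonneg _).trans h) h hm hmA

theorem ContDiff.hasDerivAt_deriv_iteratedDeriv_two {g : ℝ → ℝ} (hg : ContDiff ℝ 2 g) (x : ℝ) :
    HasDerivAt (deriv g) (iteratedDeriv 2 g x) x := by
  have hdiff : Differentiable ℝ (deriv g) := by
    simpa [iteratedDeriv_one] using hg.differentiable_iteratedDeriv' 1
  rw [iteratedDeriv_succ, iteratedDeriv_one]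
  exact (hdiff x).hasDerivAt

theorem ContDiff.exists_lipschitzOnWith_iteratedDeriv_two {g : ℝ → ℝ} (hg : ContDiff ℝ 3 g)
    {s : Set ℝ} (hs : IsCompact s) : ∃ K, LipschitzOnWith K (iteratedDeriv 2 g) s := by
  have hg2 : ContDiff ℝ 1 (iteratedDeriv 2 g) := by
    rw [iteratedDeriv_eq_iterate]
    exact hg.iterate_deriv' 1 2
  exact hg2.locallyLipschitz.locallyLipschitzOn.exists_lipschitzOnWith_of_compact hs

/-- Newton-type estimate of the interior-maximum time within one integration
step: if `g` is C³, `g(δt) = 0`, `g'(δt) > 0`, `g` has a critical point at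
`δt + δt*` inside the step, and `g''(δt) ≤ −m < 0`, then
`δt*₀ := −g'(δt)/g''(δt)` satisfies `|δt* − δt*₀| = O(h²)` as `h → 0`
(uniformly for `δt, δt* = O(h)`). -/
theorem interior_max_newton_estimate
    (g : ℝ → ℝ) (hg : ContDiff ℝ 3 g) (m : ℝ) (hm : 0 < m) :
    ∃ C > 0, ∃ h₀ > 0, ∀ h δt δts : ℝ, 0 < h → h < h₀ →
      0 ≤ δt → δt < h → 0 ≤ δts → δt + δts ≤ h →
      g δt = 0 → 0 < deriv g δt →
      deriv g (δt + δts) = 0 →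
      iteratedDeriv 2 g δt ≤ -m →
      |δts - (-(deriv g δt) / iteratedDeriv 2 g δt)| ≤ C * h ^ 2 := by
  obtain ⟨K, hK⟩ := hg.exists_lipschitzOnWith_iteratedDeriv_two (isCompact_Icc (a := 0) (b := 1))
  refine ⟨(K + 1) / m, by positivity, 1, one_pos, ?_⟩
  intro h δt δts hh hh₁ hδt _ hδts hsum _ _ hcrit hg₂
  have hstep : Icc δt (δt + δts) ⊆ Icc 0 1 := Icc_subset_Icc hδt (by linarith)
  have htaylor := abs_sub_sub_mul_le_of_lipschitzOnWith_deriv (le_add_of_nonneg_right hδts)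
    (fun x _ ↦ (hg.of_le (by norm_num)).hasDerivAt_deriv_iteratedDeriv_two x) (hK.mono hstep)
  rw [hcrit, add_sub_cancel_left, zero_sub, sub_eq_add_neg, ← neg_add, abs_neg] at htaylor
  calc |δts - -deriv g δt / iteratedDeriv 2 g δt| ≤ K * δts ^ 2 / m :=
        abs_sub_neg_div_le_of_abs_add_mul_le hm hg₂ htaylor
    _ ≤ (K + 1) / m * h ^ 2 := by
        rw [div_mul_eq_mul_div]
        gcongr
        · exact le_add_of_nonneg_right zero_le_one
        · linarith
end
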